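/- arXiv:1801.08239 — 5 statements merged into one kernel-verified Lean document; each statement's English description precedes it below -/
import Mathlib

section
/- Let [ABCD] be a geodesic quadrilateral in the hyperbolic plane with angles ≥ π/2 at B, C, and D. Then sinh(d(B,C)) · sinh(d(C,D)) ≤ 1. -/
open Real

set_option maxHeartbeats 1000000

/-- The angle at vertex `B` between the hyperbolic geodesic segments `BA` and `BC`,
recovered from the side lengths via the hyperbolic law of cosines. -/
noncomputable def hangle (A B C : UpperHalfPlane) : ℝ :=
  Real.arccos ((Real.cosh (dist B A) * Real.cosh (dist B C) - Real.cosh (dist A C)) /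
    (Real.sinh (dist B A) * Real.sinh (dist B C)))

namespace HyperbolicQuadAux

/-- Minkowski pairing on `ℝ³` (signature `(+,+,-)`). -/
def mk3 (u v : ℝ × ℝ × ℝ) : ℝ := u.1 * v.1 + u.2.1 * v.2.1 - u.2.2 * v.2.2

/-- Hyperboloid embedding of the upper half plane. -/
noncomputable def emb (z : UpperHalfPlane) : ℝ × ℝ × ℝ :=
  ((z.re ^ 2 + z.im ^ 2 - 1) / (2 * z.im), z.re / z.im,
    (z.re ^ 2 + z.im ^ 2 + 1) / (2 * z.im))

lemma mk3_emb (z w : UpperHalfPlane) :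
    mk3 (emb z) (emb w) = - Real.cosh (dist z w) := by
  have hz := z.im_pos
  have hw := w.im_pos
  rw [UpperHalfPlane.cosh_dist]
  have hd : dist (z : ℂ) (w : ℂ) ^ 2 = (z.re - w.re) ^ 2 + (z.im - w.im) ^ 2 := by
    rw [Complex.dist_eq_re_im, Real.sq_sqrt (by positivity)]
    simp [UpperHalfPlane.coe_re, UpperHalfPlane.coe_im]
  rw [hd]
  simp only [mk3, emb]
  field_simp
  ring

/-- Vectors Minkowski-orthogonal to a timelike vector are spacelike. -/
lemma mk3_nonneg (y w : ℝ × ℝ × ℝ) (hy : mk3 y y = -1) (hw : mk3 w y = 0) :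
    0 ≤ mk3 w w := by
  obtain ⟨p, q, r⟩ := y
  obtain ⟨w1, w2, w3⟩ := w
  simp only [mk3] at hy hw ⊢
  have key : (1 + p * p + q * q) * (w1 * w1 + w2 * w2 - w3 * w3)
      = w1 * w1 + w2 * w2 + (p * w2 - q * w1) ^ 2 := by
    linear_combination (p * w1 + q * w2 + r * w3) * hw - (w3 * w3) * hy
  nlinarith [key, sq_nonneg (p * w2 - q * w1), sq_nonneg w1, sq_nonneg w2,
    sq_nonneg p, sq_nonneg q]

/-- Cauchy–Schwarz on the orthogonal complement of a timelike vector. -/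
lemma mk3_cs (y u v : ℝ × ℝ × ℝ) (hy : mk3 y y = -1)
    (hu : mk3 u y = 0) (hv : mk3 v y = 0) :
    mk3 u v ^ 2 ≤ mk3 u u * mk3 v v := by
  have key : ∀ lam : ℝ,
      0 ≤ mk3 u u * (lam * lam) + (2 * mk3 u v) * lam + mk3 v v := by
    intro lam
    have h0 : mk3 (lam * u.1 + v.1, lam * u.2.1 + v.2.1, lam * u.2.2 + v.2.2) y = 0 := by
      simp only [mk3] at hu hv ⊢
      linear_combination lam * hu + hv
    have h1 := mk3_nonneg y _ hy h0
    have h2 : mk3 (lam * u.1 + v.1, lam * u.2.1 + v.2.1, lam * u.2.2 + v.2.2)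
        (lam * u.1 + v.1, lam * u.2.1 + v.2.1, lam * u.2.2 + v.2.2)
        = mk3 u u * (lam * lam) + (2 * mk3 u v) * lam + mk3 v v := by
      simp only [mk3]; ring
    rw [h2] at h1
    exact h1
  have hd := discrim_le_zero key
  rw [discrim] at hd
  nlinarith [hd]

lemma endgame (a b γ d e f s2 t2 P1 P2 S : ℝ)
    (hs2 : s2 = a ^ 2 - 1) (ht2 : t2 = b ^ 2 - 1)
    (hP1 : P1 = a * γ - d) (hP2 : P2 = b * γ - f)
    (hS : S = P1 ^ 2 * t2 + P2 ^ 2 * s2)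
    (ha : 1 < a) (hb : 1 < b) (hγ : 1 ≤ γ)
    (h1 : d * a ≤ γ) (h2 : a * b ≤ e) (h3 : b * f ≤ γ)
    (F1 : S ^ 2 ≤ (γ ^ 2 - 1) * (s2 * t2 * S + 2 * P1 * P2 * s2 * t2 * (a * b - e))) :
    s2 * t2 ≤ 1 := by
  have hapos : (0:ℝ) < a := by linarith
  have hbpos : (0:ℝ) < b := by linarith
  have hγpos : (0:ℝ) < γ := by linarith
  have hs2pos : 0 < s2 := by rw [hs2]; nlinarith
  have ht2pos : 0 < t2 := by rw [ht2]; nlinarith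
  have haP1 : γ * s2 ≤ a * P1 := by rw [hP1, hs2]; nlinarith
  have hbP2 : γ * t2 ≤ b * P2 := by rw [hP2, ht2]; nlinarith
  have hP1pos : 0 < P1 := by
    by_contra h
    push_neg at h
    have h' : a * P1 ≤ a * 0 := mul_le_mul_of_nonneg_left h hapos.le
    nlinarith [mul_pos hγpos hs2pos]
  have hP2pos : 0 < P2 := by
    by_contra h
    push_neg at h
    have h' : b * P2 ≤ b * 0 := mul_le_mul_of_nonneg_left h hbpos.le
    nlinarith [mul_pos hγpos ht2pos]
  have hSpos : 0 < S := by
    rw [hS]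
    nlinarith [mul_pos (mul_pos hP1pos hP1pos) ht2pos,
      mul_pos (mul_pos hP2pos hP2pos) hs2pos]
  have hγ2 : 0 ≤ γ ^ 2 - 1 := by nlinarith
  have habe : a * b - e ≤ 0 := by linarith
  have hq : P1 * P2 * (s2 * t2) * (a * b - e) ≤ 0 :=
    mul_nonpos_of_nonneg_of_nonpos
      (mul_nonneg (mul_nonneg hP1pos.le hP2pos.le) (mul_nonneg hs2pos.le ht2pos.le)) habe
  have hB : s2 * t2 * S + 2 * P1 * P2 * s2 * t2 * (a * b - e) ≤ s2 * t2 * S := by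
    nlinarith [hq]
  have hC : S ^ 2 ≤ (γ ^ 2 - 1) * (s2 * t2 * S) := by
    have := mul_le_mul_of_nonneg_left hB hγ2
    linarith
  have hE : S ≤ (γ ^ 2 - 1) * (s2 * t2) := by
    have h' : S * S ≤ ((γ ^ 2 - 1) * (s2 * t2)) * S := by nlinarith [hC]
    exact le_of_mul_le_mul_right h' hSpos
  have h1' : γ ^ 2 * s2 ^ 2 ≤ (a * P1) ^ 2 := by
    have := mul_self_le_mul_self (mul_nonneg hγpos.le hs2pos.le) haP1
    nlinarith [this]
  have h2' : γ ^ 2 * t2 ^ 2 ≤ (b * P2) ^ 2 := by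
    have := mul_self_le_mul_self (mul_nonneg hγpos.le ht2pos.le) hbP2
    nlinarith [this]
  have h3' : a ^ 2 * b ^ 2 * S ≤ a ^ 2 * b ^ 2 * ((γ ^ 2 - 1) * (s2 * t2)) :=
    mul_le_mul_of_nonneg_left hE (by positivity)
  have h4 : γ ^ 2 * (s2 * t2) * (b ^ 2 * s2 + a ^ 2 * t2) ≤ a ^ 2 * b ^ 2 * S := by
    rw [hS]
    nlinarith [mul_le_mul_of_nonneg_left h1' (mul_nonneg (sq_nonneg b) ht2pos.le),
      mul_le_mul_of_nonneg_left h2' (mul_nonneg (sq_nonneg a) hs2pos.le)]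
  have h5 : γ ^ 2 * (b ^ 2 * s2 + a ^ 2 * t2) * (s2 * t2)
      ≤ (a ^ 2 * b ^ 2 * (γ ^ 2 - 1)) * (s2 * t2) := by nlinarith [h4, h3']
  have hF : γ ^ 2 * (b ^ 2 * s2 + a ^ 2 * t2) ≤ a ^ 2 * b ^ 2 * (γ ^ 2 - 1) :=
    le_of_mul_le_mul_right h5 (mul_pos hs2pos ht2pos)
  rw [hs2, ht2] at hF ⊢
  nlinarith [hF, mul_pos hγpos hγpos, sq_nonneg (a * b)]

lemma alg (u x y z : ℝ × ℝ × ℝ) (a b γ d e f : ℝ)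
    (hyy : mk3 y y = -1) (hxx : mk3 x x = -1) (hzz : mk3 z z = -1) (huu : mk3 u u = -1)
    (hxy : mk3 x y = -a) (hyz : mk3 y z = -b) (huy : mk3 u y = -γ)
    (hxu : mk3 x u = -d) (hxz : mk3 x z = -e) (hzu : mk3 z u = -f)
    (ha : 1 < a) (hb : 1 < b) (hγ : 1 ≤ γ)
    (h1 : d * a ≤ γ) (h2 : a * b ≤ e) (h3 : b * f ≤ γ) :
    (a ^ 2 - 1) * (b ^ 2 - 1) ≤ 1 := by
  obtain ⟨u1, u2, u3⟩ := u
  obtain ⟨x1, x2, x3⟩ := x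
  obtain ⟨y1, y2, y3⟩ := y
  obtain ⟨z1, z2, z3⟩ := z
  simp only [mk3] at hyy hxx hzz huu hxy hyz huy hxu hxz hzu
  -- abbreviations for the projections onto the orthogonal complement of y
  -- U = u - γ y, V = c1 (x - a y) + c2 (z - b y), c1 = P1 t2, c2 = P2 s2
  have hUy : mk3 (u1 - γ * y1, u2 - γ * y2, u3 - γ * y3) (y1, y2, y3) = 0 := by
    simp only [mk3]
    linear_combination huy - γ * hyy
  have hVy : mk3
      ((a * γ - d) * (b ^ 2 - 1) * x1 + (b * γ - f) * (a ^ 2 - 1) * z1 -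
        ((a * γ - d) * (b ^ 2 - 1) * a + (b * γ - f) * (a ^ 2 - 1) * b) * y1,
       (a * γ - d) * (b ^ 2 - 1) * x2 + (b * γ - f) * (a ^ 2 - 1) * z2 -
        ((a * γ - d) * (b ^ 2 - 1) * a + (b * γ - f) * (a ^ 2 - 1) * b) * y2,
       (a * γ - d) * (b ^ 2 - 1) * x3 + (b * γ - f) * (a ^ 2 - 1) * z3 -
        ((a * γ - d) * (b ^ 2 - 1) * a + (b * γ - f) * (a ^ 2 - 1) * b) * y3)
      (y1, y2, y3) = 0 := by
    simp only [mk3]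
    linear_combination (a * γ - d) * (b ^ 2 - 1) * hxy + (b * γ - f) * (a ^ 2 - 1) * hyz -
      ((a * γ - d) * (b ^ 2 - 1) * a + (b * γ - f) * (a ^ 2 - 1) * b) * hyy
  have hUU : mk3 (u1 - γ * y1, u2 - γ * y2, u3 - γ * y3)
      (u1 - γ * y1, u2 - γ * y2, u3 - γ * y3) = γ ^ 2 - 1 := by
    simp only [mk3]
    linear_combination huu - 2 * γ * huy + γ ^ 2 * hyy
  have hUV : mk3 (u1 - γ * y1, u2 - γ * y2, u3 - γ * y3)
      ((a * γ - d) * (b ^ 2 - 1) * x1 + (b * γ - f) * (a ^ 2 - 1) * z1 -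
        ((a * γ - d) * (b ^ 2 - 1) * a + (b * γ - f) * (a ^ 2 - 1) * b) * y1,
       (a * γ - d) * (b ^ 2 - 1) * x2 + (b * γ - f) * (a ^ 2 - 1) * z2 -
        ((a * γ - d) * (b ^ 2 - 1) * a + (b * γ - f) * (a ^ 2 - 1) * b) * y2,
       (a * γ - d) * (b ^ 2 - 1) * x3 + (b * γ - f) * (a ^ 2 - 1) * z3 -
        ((a * γ - d) * (b ^ 2 - 1) * a + (b * γ - f) * (a ^ 2 - 1) * b) * y3)
      = (a * γ - d) ^ 2 * (b ^ 2 - 1) + (b * γ - f) ^ 2 * (a ^ 2 - 1) := by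
    simp only [mk3]
    linear_combination (a * γ - d) * (b ^ 2 - 1) * hxu + (b * γ - f) * (a ^ 2 - 1) * hzu -
      ((a * γ - d) * (b ^ 2 - 1) * a + (b * γ - f) * (a ^ 2 - 1) * b) * huy -
      γ * ((a * γ - d) * (b ^ 2 - 1) * hxy + (b * γ - f) * (a ^ 2 - 1) * hyz -
        ((a * γ - d) * (b ^ 2 - 1) * a + (b * γ - f) * (a ^ 2 - 1) * b) * hyy)
  have hVV : mk3
      ((a * γ - d) * (b ^ 2 - 1) * x1 + (b * γ - f) * (a ^ 2 - 1) * z1 -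
        ((a * γ - d) * (b ^ 2 - 1) * a + (b * γ - f) * (a ^ 2 - 1) * b) * y1,
       (a * γ - d) * (b ^ 2 - 1) * x2 + (b * γ - f) * (a ^ 2 - 1) * z2 -
        ((a * γ - d) * (b ^ 2 - 1) * a + (b * γ - f) * (a ^ 2 - 1) * b) * y2,
       (a * γ - d) * (b ^ 2 - 1) * x3 + (b * γ - f) * (a ^ 2 - 1) * z3 -
        ((a * γ - d) * (b ^ 2 - 1) * a + (b * γ - f) * (a ^ 2 - 1) * b) * y3)
      ((a * γ - d) * (b ^ 2 - 1) * x1 + (b * γ - f) * (a ^ 2 - 1) * z1 -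
        ((a * γ - d) * (b ^ 2 - 1) * a + (b * γ - f) * (a ^ 2 - 1) * b) * y1,
       (a * γ - d) * (b ^ 2 - 1) * x2 + (b * γ - f) * (a ^ 2 - 1) * z2 -
        ((a * γ - d) * (b ^ 2 - 1) * a + (b * γ - f) * (a ^ 2 - 1) * b) * y2,
       (a * γ - d) * (b ^ 2 - 1) * x3 + (b * γ - f) * (a ^ 2 - 1) * z3 -
        ((a * γ - d) * (b ^ 2 - 1) * a + (b * γ - f) * (a ^ 2 - 1) * b) * y3)
      = (a ^ 2 - 1) * (b ^ 2 - 1) *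
          ((a * γ - d) ^ 2 * (b ^ 2 - 1) + (b * γ - f) ^ 2 * (a ^ 2 - 1)) +
        2 * (a * γ - d) * (b * γ - f) * (a ^ 2 - 1) * (b ^ 2 - 1) * (a * b - e) := by
    simp only [mk3]
    linear_combination ((a * γ - d) * (b ^ 2 - 1)) ^ 2 * hxx +
      ((b * γ - f) * (a ^ 2 - 1)) ^ 2 * hzz +
      ((a * γ - d) * (b ^ 2 - 1) * a + (b * γ - f) * (a ^ 2 - 1) * b) ^ 2 * hyy +
      2 * ((a * γ - d) * (b ^ 2 - 1)) * ((b * γ - f) * (a ^ 2 - 1)) * hxz -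
      2 * ((a * γ - d) * (b ^ 2 - 1)) *
        ((a * γ - d) * (b ^ 2 - 1) * a + (b * γ - f) * (a ^ 2 - 1) * b) * hxy -
      2 * ((b * γ - f) * (a ^ 2 - 1)) *
        ((a * γ - d) * (b ^ 2 - 1) * a + (b * γ - f) * (a ^ 2 - 1) * b) * hyz
  have hcs := mk3_cs (y1, y2, y3) _ _ hyy hUy hVy
  rw [hUV, hUU, hVV] at hcs
  exact endgame a b γ d e f _ _ _ _ _ rfl rfl rfl rfl rfl ha hb hγ h1 h2 h3 hcs

lemma extract (P Q R : UpperHalfPlane) (h1 : P ≠ Q) (h2 : Q ≠ R)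
    (h3 : hangle P Q R ≥ π / 2) :
    Real.cosh (dist Q P) * Real.cosh (dist Q R) ≤ Real.cosh (dist P R) := by
  have hd1 : 0 < dist Q P := dist_pos.2 h1.symm
  have hd2 : 0 < dist Q R := dist_pos.2 h2
  have hden : 0 < Real.sinh (dist Q P) * Real.sinh (dist Q R) :=
    mul_pos (Real.sinh_pos_iff.2 hd1) (Real.sinh_pos_iff.2 hd2)
  by_contra hcon
  push_neg at hcon
  have hnum : 0 < Real.cosh (dist Q P) * Real.cosh (dist Q R) - Real.cosh (dist P R) := by
    linarith
  have hx : 0 < (Real.cosh (dist Q P) * Real.cosh (dist Q R) - Real.cosh (dist P R)) /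
      (Real.sinh (dist Q P) * Real.sinh (dist Q R)) := div_pos hnum hden
  have := Real.arccos_lt_pi_div_two.2 hx
  unfold hangle at h3
  linarith

end HyperbolicQuadAux

open HyperbolicQuadAux in
/-- For a geodesic quadrilateral `[ABCD]` in the hyperbolic plane whose interior
angles at `B`, `C` and `D` are all at least `π/2`, one has
`sinh(d(B,C)) · sinh(d(C,D)) ≤ 1`. -/
theorem sinh_mul_sinh_le_one_of_three_right_angles
    (A B C D : UpperHalfPlane)
    (hAB : A ≠ B) (hBC : B ≠ C) (hCD : C ≠ D) (hDA : D ≠ A)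
    (hB : hangle A B C ≥ π / 2) (hC : hangle B C D ≥ π / 2)
    (hD : hangle C D A ≥ π / 2) :
    Real.sinh (dist B C) * Real.sinh (dist C D) ≤ 1 := by
  have e1 := extract A B C hAB hBC hB
  have e2 := extract B C D hBC hCD hC
  have e3 := extract C D A hCD hDA hD
  rw [dist_comm B A] at e1
  rw [dist_comm C B] at e2
  rw [dist_comm D C, dist_comm C A] at e3
  -- e1 : cosh (dist A B) * cosh (dist B C) ≤ cosh (dist A C)
  -- e2 : cosh (dist B C) * cosh (dist C D) ≤ cosh (dist B D)
  -- e3 : cosh (dist C D) * cosh (dist D A) ≤ cosh (dist A C)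
  have hself : ∀ z : UpperHalfPlane, mk3 (emb z) (emb z) = -1 := by
    intro z
    rw [mk3_emb]
    simp
  have halg := alg (emb A) (emb B) (emb C) (emb D)
    (Real.cosh (dist B C)) (Real.cosh (dist C D)) (Real.cosh (dist A C))
    (Real.cosh (dist A B)) (Real.cosh (dist B D)) (Real.cosh (dist D A))
    (hself C) (hself B) (hself D) (hself A)
    (mk3_emb B C) (mk3_emb C D) (mk3_emb A C) ?_ (mk3_emb B D) (mk3_emb D A)
    (Real.one_lt_cosh.2 (dist_pos.2 hBC).ne') (Real.one_lt_cosh.2 (dist_pos.2 hCD).ne')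
    (Real.one_le_cosh _) e1 e2 (by linarith [e3])
  · nlinarith [halg, Real.cosh_sq (dist B C), Real.cosh_sq (dist C D),
      sq_nonneg (Real.sinh (dist B C) * Real.sinh (dist C D) - 1)]
  · rw [mk3_emb, dist_comm]
end

section
/- Let [ABCD] be a geodesic quadrilateral in the hyperbolic plane with angles at B, C, D each at least π/2, and with angle α > 0 at A. If cosh(d(A,B)) · sin(α) > 1, then cosh(d(C,D)) ≥ cosh(d(A,B)) · sin(α). -/
open Real

/-!
Send the upper half-plane to the hyperboloid model in Minkowski space `ℝ^{1,2}`, where `-cosh`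
of the distances are Minkowski products. Since the four vertices lie in a 3-dimensional space,
the mixed Gram determinant of `(A, C, D)` against `(B, C, D)` factors as a product of two
ordinary determinants. The non-acute angles at `B`, `C`, `D` read `cosh AB · cosh BC ≤ cosh AC`
and its analogues; played against these Gram identities they force the angle at `A` to be at
most `π/2` and `cosh AB · sin A ≤ cosh CD`, and `α ≤ A ≤ π/2` gives `sin α ≤ sin A`.
-/

theorem Real.le_cos_of_le_arccos {x β : ℝ} (hβ : 0 < β) (h : β ≤ arccos x) : x ≤ cos β := by
  have hx : x < 1 := arccos_pos.1 (hβ.trans_le h)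
  calc x ≤ cos (arccos x) := by
        rcases le_total x (-1) with hx' | hx'
        · simpa [arccos_of_le_neg_one hx'] using hx'
        · rw [cos_arccos hx' hx.le]
    _ ≤ cos β := cos_le_cos_of_nonneg_of_le_pi hβ.le (arccos_le_pi x) h

theorem cosh_mul_cosh_sub_cosh_le_of_le_hangle {A B C : UpperHalfPlane} {β : ℝ}
    (hAB : A ≠ B) (hBC : B ≠ C) (hβ : 0 < β) (h : β ≤ hangle A B C) :
    cosh (dist A B) * cosh (dist B C) - cosh (dist A C) ≤
      cos β * (sinh (dist A B) * sinh (dist B C)) := by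
  have hpos : 0 < sinh (dist A B) * sinh (dist B C) := by
    have := dist_pos.2 hAB; have := dist_pos.2 hBC; positivity
  rw [hangle, dist_comm B A] at h
  exact (div_le_iff₀ hpos).1 (le_cos_of_le_arccos hβ h)

theorem cosh_mul_cosh_le_of_pi_div_two_le_hangle {A B C : UpperHalfPlane}
    (hAB : A ≠ B) (hBC : B ≠ C) (h : π / 2 ≤ hangle A B C) :
    cosh (dist A B) * cosh (dist B C) ≤ cosh (dist A C) := by
  have := cosh_mul_cosh_sub_cosh_le_of_le_hangle hAB hBC (by positivity) h
  rw [cos_pi_div_two, zero_mul] at this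
  linarith

/-- The hyperboloid model: the Minkowski product `-x₀y₀ + x₁y₁ + x₂y₂` of the images of `z` and
`w` is `-cosh (dist z w)`. -/
noncomputable def hyperboloidPoint (z : UpperHalfPlane) : Fin 3 → ℝ :=
  ![(z.re ^ 2 + z.im ^ 2 + 1) / (2 * z.im), (z.re ^ 2 + z.im ^ 2 - 1) / (2 * z.im),
    z.re / z.im]

noncomputable def lorentzDet (a b c : UpperHalfPlane) : ℝ :=
  Matrix.det (Matrix.of ![hyperboloidPoint a, hyperboloidPoint b, hyperboloidPoint c])

/-- Both sides are, up to the sign of the Minkowski form, the determinant of the matrix of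
Minkowski products of `(a, c, d)` against `(b, c, d)`. -/
theorem cosh_dist_mixed_gram (a b c d : UpperHalfPlane) :
    cosh (dist a c) * cosh (dist b c) * (cosh (dist c d) ^ 2 - 1)
      - (cosh (dist c d) * cosh (dist a c) - cosh (dist a d))
        * (cosh (dist c d) * cosh (dist b c) - cosh (dist b d))
      - cosh (dist a b) * (cosh (dist c d) ^ 2 - 1) =
    lorentzDet a c d * lorentzDet b c d := by
  have := a.im_pos; have := b.im_pos; have := c.im_pos; have := d.im_pos
  simp only [lorentzDet, Matrix.det_fin_three, UpperHalfPlane.cosh_dist']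
  simp [hyperboloidPoint]
  field_simp
  ring

theorem cosh_dist_gram (a c d : UpperHalfPlane) :
    (cosh (dist a c) ^ 2 - 1) * (cosh (dist c d) ^ 2 - 1)
      - (cosh (dist c d) * cosh (dist a c) - cosh (dist a d)) ^ 2 = lorentzDet a c d ^ 2 := by
  have h := cosh_dist_mixed_gram a a c d
  rw [dist_self, cosh_zero] at h
  linear_combination h

/-! For a quadrilateral `ABCD`, `p q r s` stand for the `cosh` of the sides `AB BC CD DA`, `e f`
for the `cosh` of the diagonals `AC BD`, and `dA dB` for `lorentzDet A C D`, `lorentzDet B C D`;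
`hB hC hD` are the conditions that the angles at `B C D` are not acute. -/

section
variable {p q r s e f dA dB : ℝ}

theorem mul_sq_det_le_of_obtuse (hq : 0 ≤ q) (hr : 1 ≤ r) (hs : 0 ≤ s) (he : 0 ≤ e)
    (hB : p * q ≤ e) (hC : q * r ≤ f) (hD : r * s ≤ e)
    (J2 : (q ^ 2 - 1) * (r ^ 2 - 1) - (r * q - f) ^ 2 = dB ^ 2)
    (J3 : e * q * (r ^ 2 - 1) - (r * e - s) * (r * q - f) - p * (r ^ 2 - 1) = dA * dB) :
    e * dB ^ 2 ≤ q * (dA * dB) := by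
  have key : q * (dA * dB) = e * dB ^ 2 + (r ^ 2 - 1) * (e - p * q)
      + (f - r * q) * ((r * e - s) * q + e * (f - r * q)) := by
    rw [← J2, ← J3]; ring
  have hs_le : s ≤ r * e := by nlinarith
  have h1 : 0 ≤ (r ^ 2 - 1) * (e - p * q) := mul_nonneg (by nlinarith) (by linarith)
  have h2 : 0 ≤ (f - r * q) * ((r * e - s) * q + e * (f - r * q)) :=
    mul_nonneg (by linarith)
      (add_nonneg (mul_nonneg (by linarith) hq) (mul_nonneg he (by linarith)))
  rw [key]
  linarith [mul_nonneg he (sq_nonneg dB)]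

theorem mul_det_le_mul_sq_of_obtuse (hq : 0 < q) (hr : 1 ≤ r) (hs : 0 ≤ s) (he : 0 < e)
    (hB : p * q ≤ e) (hC : q * r ≤ f) (hD : r * s ≤ e)
    (J2 : (q ^ 2 - 1) * (r ^ 2 - 1) - (r * q - f) ^ 2 = dB ^ 2)
    (J3 : e * q * (r ^ 2 - 1) - (r * e - s) * (r * q - f) - p * (r ^ 2 - 1) = dA * dB) :
    e * (dA * dB) ≤ q * dA ^ 2 := by
  have h := mul_sq_det_le_of_obtuse hq.le hr hs he.le hB hC hD J2 J3
  rcases (show 0 ≤ dA * dB by nlinarith [sq_nonneg dB]).eq_or_lt with h0 | hpos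
  · rw [← h0, mul_zero]; positivity
  · nlinarith

theorem le_mul_of_obtuse (hq : 0 < q) (hr : 1 < r) (hs : 1 ≤ s) (he : 0 < e)
    (hB : p * q ≤ e) (hC : q * r ≤ f) (hD : r * s ≤ e)
    (J1 : (e ^ 2 - 1) * (r ^ 2 - 1) - (r * e - s) ^ 2 = dA ^ 2)
    (J2 : (q ^ 2 - 1) * (r ^ 2 - 1) - (r * q - f) ^ 2 = dB ^ 2)
    (J3 : e * q * (r ^ 2 - 1) - (r * e - s) * (r * q - f) - p * (r ^ 2 - 1) = dA * dB) :
    f ≤ p * s := by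
  have key : (r ^ 2 - 1) * e * (p * s - f) = s * (q * dA ^ 2 - e * (dA * dB))
      + ((r * e - s) * s - (r ^ 2 - 1)) * (e * f - s * q) := by
    rw [← J1, ← J3]; ring
  have h1 := mul_det_le_mul_sq_of_obtuse hq hr.le (by linarith) he hB hC hD J2 J3
  have h2 : 0 ≤ (r * e - s) * s - (r ^ 2 - 1) := by nlinarith
  have h3 : s * q ≤ e * f := by
    have : r * s * (q * r) ≤ e * f := mul_le_mul hD hC (by positivity) he.le
    nlinarith [mul_le_mul_of_nonneg_left (show 1 ≤ r ^ 2 by nlinarith)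
      (show 0 ≤ s * q by positivity)]
  have h4 : 0 ≤ (r ^ 2 - 1) * e * (p * s - f) := by
    rw [key]
    exact add_nonneg (mul_nonneg (by linarith) (by linarith)) (mul_nonneg h2 (by linarith))
  have h5 : 0 < (r ^ 2 - 1) * e := mul_pos (by nlinarith) he
  exact sub_nonneg.1 (nonneg_of_mul_nonneg_right (by linarith) h5)

theorem sq_mul_sub_le_of_obtuse (hr : 0 ≤ r) (hB : p * q ≤ e) (hpf : s ≤ p * f)
    (J1 : (e ^ 2 - 1) * (r ^ 2 - 1) - (r * e - s) ^ 2 = dA ^ 2)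
    (J2 : (q ^ 2 - 1) * (r ^ 2 - 1) - (r * q - f) ^ 2 = dB ^ 2)
    (J3 : e * q * (r ^ 2 - 1) - (r * e - s) * (r * q - f) - p * (r ^ 2 - 1) = dA * dB) :
    (p * f - s) ^ 2 ≤ (r ^ 2 - 1) * (p ^ 2 - 1) := by
  have key : (p * f - s) ^ 2 + 2 * r * (p * f - s) * (e - p * q) + (e - p * q) ^ 2
      + (dA - p * dB) ^ 2 = (r ^ 2 - 1) * (p ^ 2 - 1) := by
    linear_combination (-1 : ℝ) * J1 + 2 * p * J3 - p ^ 2 * J2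
  have : 0 ≤ 2 * r * (p * f - s) * (e - p * q) :=
    mul_nonneg (mul_nonneg (by positivity) (by linarith)) (by linarith)
  nlinarith [sq_nonneg (e - p * q), sq_nonneg (dA - p * dB)]

theorem sq_mul_gram_le_of_obtuse (hp : 1 ≤ p) (hr : 1 ≤ r) (hs : 1 ≤ s)
    (hB : p * q ≤ e)
    (J1 : (e ^ 2 - 1) * (r ^ 2 - 1) - (r * e - s) ^ 2 = dA ^ 2)
    (J2 : (q ^ 2 - 1) * (r ^ 2 - 1) - (r * q - f) ^ 2 = dB ^ 2)
    (J3 : e * q * (r ^ 2 - 1) - (r * e - s) * (r * q - f) - p * (r ^ 2 - 1) = dA * dB) :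
    p ^ 2 * ((p ^ 2 - 1) * (s ^ 2 - 1) - (p * s - f) ^ 2) ≤
      r ^ 2 * ((p ^ 2 - 1) * (s ^ 2 - 1)) := by
  have hp2 : 0 ≤ p ^ 2 - 1 := by nlinarith
  have hr2 : 0 ≤ r ^ 2 - 1 := by nlinarith
  have hs2 : 0 ≤ s ^ 2 - 1 := by nlinarith
  rcases le_total s (p * f) with hpf | hpf
  · have h := sq_mul_sub_le_of_obtuse (by linarith) hB hpf J1 J2 J3
    have key : r ^ 2 * ((p ^ 2 - 1) * (s ^ 2 - 1))
          - p ^ 2 * ((p ^ 2 - 1) * (s ^ 2 - 1) - (p * s - f) ^ 2)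
        = (s ^ 2 - 1) * ((r ^ 2 - 1) * (p ^ 2 - 1) - (p * f - s) ^ 2)
          + (p * s * f - p ^ 2 - s ^ 2 + 1) ^ 2 := by ring
    rw [← sub_nonneg, key]
    exact add_nonneg (mul_nonneg hs2 (sub_nonneg.2 h)) (sq_nonneg _)
  · have h : s * (p ^ 2 - 1) ≤ p * (p * s - f) := by nlinarith
    have h' := pow_le_pow_left₀ (by positivity) h 2
    nlinarith [mul_nonneg hp2 hs2]

theorem mul_sin_le_of_sq_mul_gram_le {u v α : ℝ}
    (hu : u ^ 2 = p ^ 2 - 1) (hv : v ^ 2 = s ^ 2 - 1) (huv : 0 < v * u) (hr : 0 ≤ r)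
    (hf : f ≤ p * s) (hA : s * p - f ≤ cos α * (v * u))
    (hG : p ^ 2 * ((p ^ 2 - 1) * (s ^ 2 - 1) - (p * s - f) ^ 2) ≤
      r ^ 2 * ((p ^ 2 - 1) * (s ^ 2 - 1))) :
    p * sin α ≤ r := by
  have hcos : (p * s - f) ^ 2 ≤ (cos α * (v * u)) ^ 2 :=
    pow_le_pow_left₀ (by linarith) (by linarith) 2
  rw [← hu, ← hv] at hG
  have : (p * sin α) ^ 2 * (v * u) ^ 2 ≤ r ^ 2 * (v * u) ^ 2 := by
    have h := mul_le_mul_of_nonneg_left hcos (sq_nonneg p)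
    linear_combination h + hG + p ^ 2 * (v * u) ^ 2 * sin_sq_add_cos_sq α
  exact le_of_sq_le_sq (le_of_mul_le_mul_right this (by positivity)) hr

end

theorem cosh_ge_of_three_right_angles_general
    (A B C D : UpperHalfPlane) (α : ℝ)
    (hAB : A ≠ B) (hBC : B ≠ C) (hCD : C ≠ D) (hDA : D ≠ A)
    (hα : 0 < α)
    (hB : hangle A B C ≥ π / 2) (hC : hangle B C D ≥ π / 2)
    (hD : hangle C D A ≥ π / 2)
    (hA : hangle D A B ≥ α) :
    Real.cosh (dist C D) ≥ Real.cosh (dist A B) * Real.sin α := by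
  have hB' := cosh_mul_cosh_le_of_pi_div_two_le_hangle hAB hBC hB
  have hC' := cosh_mul_cosh_le_of_pi_div_two_le_hangle hBC hCD hC
  have hD' := cosh_mul_cosh_le_of_pi_div_two_le_hangle hCD hDA hD
  have hA' := cosh_mul_cosh_sub_cosh_le_of_le_hangle hDA hAB hα hA
  rw [dist_comm D A, dist_comm C A] at hD'
  rw [dist_comm D A, dist_comm D B] at hA'
  have J1 := cosh_dist_gram A C D
  have J2 := cosh_dist_gram B C D
  have J3 := cosh_dist_mixed_gram A B C D
  have one_lt {x y : UpperHalfPlane} (h : x ≠ y) : 1 < cosh (dist x y) :=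
    one_lt_cosh.2 (dist_pos.2 h).ne'
  have hp := one_lt hAB
  have hq := one_lt hBC
  have hr := one_lt hCD
  have hs := one_lt hDA.symm
  have he : 1 < cosh (dist A C) := by nlinarith
  exact mul_sin_le_of_sq_mul_gram_le (sinh_sq _) (sinh_sq _)
    (mul_pos (sinh_pos_iff.2 (dist_pos.2 hDA.symm)) (sinh_pos_iff.2 (dist_pos.2 hAB)))
    (by linarith)
    (le_mul_of_obtuse (by linarith) hr hs.le (by linarith) hB' hC' hD' J1 J2 J3) hA'
    (sq_mul_gram_le_of_obtuse hp.le hr.le hs.le hB' J1 J2 J3)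

/-- For a geodesic quadrilateral `[ABCD]` in the hyperbolic plane whose interior
angles at `B`, `C`, `D` are at least `π/2` and whose angle at `A` is at least
`α > 0`: if `cosh(d(A,B)) · sin α > 1` then
`cosh(d(C,D)) ≥ cosh(d(A,B)) · sin α`. -/
theorem cosh_ge_of_three_right_angles
    (A B C D : UpperHalfPlane) (α : ℝ)
    (hAB : A ≠ B) (hBC : B ≠ C) (hCD : C ≠ D) (hDA : D ≠ A)
    (hα : 0 < α)
    (hB : hangle A B C ≥ π / 2) (hC : hangle B C D ≥ π / 2)
    (hD : hangle C D A ≥ π / 2)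
    (hA : hangle D A B ≥ α)
    (hbig : Real.cosh (dist A B) * Real.sin α > 1) :
    Real.cosh (dist C D) ≥ Real.cosh (dist A B) * Real.sin α :=
  cosh_ge_of_three_right_angles_general A B C D α hAB hBC hCD hDA hα hB hC hD hA
end

section
/- Let X be a δ-hyperbolic geodesic metric space and B₁, B₂, B₃ ⊆ X convex subsets with pairwise nonempty intersections. Then there exists a point x ∈ X with d(x, Bᵢ) ≤ δ for i = 1, 2, 3. -/
open Metric Set

/-- `f` parametrizes a geodesic segment from `x` to `y` by arclength. -/
def IsGeodesicSegment {X : Type*} [MetricSpace X] (f : ℝ → X) (x y : X) : Prop :=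
  f 0 = x ∧ f (dist x y) = y ∧
    ∀ s ∈ Set.Icc (0:ℝ) (dist x y), ∀ t ∈ Set.Icc (0:ℝ) (dist x y),
      dist (f s) (f t) = |s - t|

/-- The image of the geodesic segment from `x` to `y` parametrized by `f`. -/
def segImg {X : Type*} [MetricSpace X] (f : ℝ → X) (x y : X) : Set X :=
  f '' Set.Icc (0:ℝ) (dist x y)

/-- A subset is convex if it contains every geodesic segment between its points. -/
def GeodConvex {X : Type*} [MetricSpace X] (B : Set X) : Prop :=
  ∀ x ∈ B, ∀ y ∈ B, ∀ f : ℝ → X, IsGeodesicSegment f x y → segImg f x y ⊆ B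

/-- In a geodesic `δ`-hyperbolic space (every geodesic triangle has a point within `δ`
of all three sides), if convex subsets `B₁, B₂, B₃` intersect pairwise, then some point
is within distance `δ` of all three. -/
theorem helly_three_convex
    {X : Type*} [MetricSpace X] (δ : ℝ) (hδ : 0 ≤ δ)
    (hGeod : ∀ x y : X, ∃ f : ℝ → X, IsGeodesicSegment f x y)
    (hThin : ∀ (x y z : X) (f g h : ℝ → X), IsGeodesicSegment f x y →
      IsGeodesicSegment g y z → IsGeodesicSegment h x z →
      ∃ c : X, Metric.infDist c (segImg f x y) ≤ δ ∧
        Metric.infDist c (segImg g y z) ≤ δ ∧ Metric.infDist c (segImg h x z) ≤ δ)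
    (B₁ B₂ B₃ : Set X) (h₁ : GeodConvex B₁) (h₂ : GeodConvex B₂) (h₃ : GeodConvex B₃)
    (h₁₂ : (B₁ ∩ B₂).Nonempty) (h₂₃ : (B₂ ∩ B₃).Nonempty) (h₁₃ : (B₁ ∩ B₃).Nonempty) :
    ∃ x : X, Metric.infDist x B₁ ≤ δ ∧ Metric.infDist x B₂ ≤ δ ∧
      Metric.infDist x B₃ ≤ δ := by
  obtain ⟨x, hx1, hx2⟩ := h₁₂
  obtain ⟨y, hy2, hy3⟩ := h₂₃
  obtain ⟨z, hz1, hz3⟩ := h₁₃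
  obtain ⟨f, hf⟩ := hGeod x y
  obtain ⟨g, hg⟩ := hGeod y z
  obtain ⟨h, hh⟩ := hGeod x z
  obtain ⟨c, hc2, hc3, hc1⟩ := hThin x y z f g h hf hg hh
  have hne : ∀ (F : ℝ → X) (a b : X), (segImg F a b).Nonempty := fun F a b =>
    ⟨F 0, ⟨0, ⟨le_refl 0, dist_nonneg⟩, rfl⟩⟩
  refine ⟨c, ?_, ?_, ?_⟩
  · exact le_trans (Metric.infDist_le_infDist_of_subset (h₁ x hx1 z hz1 h hh) (hne h x z)) hc1
  · exact le_trans (Metric.infDist_le_infDist_of_subset (h₂ x hx2 y hy2 f hf) (hne f x y)) hc2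
  · exact le_trans (Metric.infDist_le_infDist_of_subset (h₃ y hy3 z hz3 g hg) (hne g y z)) hc3
end

section
/- Let ⟨g⟩ be an infinite cyclic group of isometries of an n-dimensional Hadamard manifold X with curvature in [-κ², -1], and let x ∈ X be a point with d(x, gⁱx) ≥ ε for all i ≠ 0. Then for every D > 0 there exists an integer i with 0 < i ≤ N(ε, n, κ, D) such that d(x, gⁱx) ≥ D, where N(ε, n, κ, D) = 1 + (C_n · e^{κ(n-1)ε/2}/(κⁿ V(ε/2, n))) · e^{κ(n-1)D} and V(r,n) is the volume of the r-ball in ℍⁿ. -/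
open Metric MeasureTheory

/-- **Large displacement of a separated orbit.**  Let `X` be an `n`-dimensional
Hadamard manifold with curvature in `[-κ², -1]`, encoded via its Riemannian volume
`μ` satisfying the volume comparison inequalities `V(s,n) ≤ μ(B(x,s)) ≤ V(κs,n)/κⁿ`,
where `V(s,n)` (the volume of the `s`-ball in `ℍⁿ`) satisfies `V(s,n) ≤ Cₙ e^{(n-1)s}`.
Let `g` be an isometry generating an infinite cyclic group and `x` a point with
`d(x, gⁱx) ≥ ε` for all `i ≠ 0`.  Then for every `D > 0` there is
`0 < i ≤ N(ε,n,κ,D) = 1 + (Cₙ e^{κ(n-1)ε/2}/(κⁿ V(ε/2,n))) e^{κ(n-1)D}` with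
`d(x, gⁱx) ≥ D`. -/
theorem exists_large_displacement
    {X : Type*} [MetricSpace X] [MeasurableSpace X] [BorelSpace X]
    (μ : Measure X) (n : ℕ) (hn : 1 ≤ n) (κ : ℝ) (hκ : 1 ≤ κ)
    (V : ℝ → ℝ) (C : ℝ) (hC : 0 < C)
    (hVpos : ∀ s : ℝ, 0 < s → 0 < V s)
    (hVmono : MonotoneOn V (Set.Ici (0:ℝ)))
    (hVexp : ∀ s : ℝ, 0 ≤ s → V s ≤ C * Real.exp ((n - 1 : ℝ) * s))
    (hlower : ∀ (y : X) (s : ℝ), 0 < s → ENNReal.ofReal (V s) ≤ μ (Metric.ball y s))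
    (hupper : ∀ (y : X) (s : ℝ), 0 < s →
      μ (Metric.ball y s) ≤ ENNReal.ofReal (V (κ * s) / κ ^ n))
    (g : X ≃ᵢ X) (x : X) (ε : ℝ) (hε : 0 < ε)
    (hsep : ∀ i : ℤ, i ≠ 0 → ε ≤ dist x ((g ^ i) x)) :
    ∀ D : ℝ, 0 < D → ∃ i : ℤ, 0 < i ∧
      (i : ℝ) ≤ 1 + (C * Real.exp (κ * (n - 1 : ℝ) * ε / 2) / (κ ^ n * V (ε / 2))) *
        Real.exp (κ * (n - 1 : ℝ) * D) ∧
      D ≤ dist x ((g ^ i) x) := by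
  intro D hD
  by_contra hcon
  push_neg at hcon
  set A : ℝ := C * Real.exp (κ * (n - 1 : ℝ) * ε / 2) / (κ ^ n * V (ε / 2)) *
        Real.exp (κ * (n - 1 : ℝ) * D) with hA
  have hκ0 : (0:ℝ) < κ := lt_of_lt_of_le one_pos hκ
  have hκn : (0:ℝ) < κ ^ n := pow_pos hκ0 n
  have hV2 : 0 < V (ε/2) := hVpos _ (by linarith)
  have hApos : 0 < A := by positivity
  set k : ℕ := ⌊1 + A⌋₊ with hk
  have hkA : (k:ℝ) ≤ 1 + A := Nat.floor_le (by linarith)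
  have hAk : 1 + A < (k:ℝ) + 1 := Nat.lt_floor_add_one _
  set p : ℕ → X := fun i => (g ^ (i:ℤ)) x with hp
  have key : ∀ a b : ℤ, dist ((g ^ a) x) ((g ^ b) x) = dist x ((g ^ (b - a)) x) := by
    intro a b
    have h1 : g ^ b = g ^ a * g ^ (b - a) := by
      rw [← zpow_add]; congr 1; ring
    rw [h1]
    have h2 : (g ^ a * g ^ (b - a)) x = (g ^ a) ((g ^ (b - a)) x) := rfl
    rw [h2, (g ^ a).dist_eq]
  have hsmall : ∀ j : ℕ, j ≤ k → dist x (p j) < D := by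
    intro j hj
    rcases Nat.eq_zero_or_pos j with h0 | h0
    · simp [hp, h0, hD]
    · have h1 := hcon (j:ℤ) (by exact_mod_cast h0)
      have hj' : ((j:ℤ):ℝ) ≤ 1 + A := by
        push_cast
        exact le_trans (by exact_mod_cast hj) hkA
      exact h1 hj'
  have hdisj : (↑(Finset.range (k+1)) : Set ℕ).PairwiseDisjoint
      (fun i => Metric.ball (p i) (ε/2)) := by
    intro i _ j _ hij
    apply Metric.ball_disjoint_ball
    have hne : (j:ℤ) - (i:ℤ) ≠ 0 := by
      intro h; apply hij; omega
    have := hsep _ hne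
    rw [hp]
    simp only
    rw [key]
    linarith
  have hsub : (⋃ i ∈ Finset.range (k+1), Metric.ball (p i) (ε/2)) ⊆
      Metric.ball x (D + ε/2) := by
    intro y hy
    simp only [Finset.mem_range, Set.mem_iUnion, Metric.mem_ball] at hy ⊢
    obtain ⟨i, hi, hyi⟩ := hy
    have := hsmall i (Nat.lt_succ_iff.mp hi)
    calc dist y x ≤ dist y (p i) + dist (p i) x := dist_triangle _ _ _
      _ < ε/2 + D := by rw [dist_comm (p i) x]; linarith
      _ = D + ε/2 := by ring
  have hmeq : μ (⋃ i ∈ Finset.range (k+1), Metric.ball (p i) (ε/2)) =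
      ∑ i ∈ Finset.range (k+1), μ (Metric.ball (p i) (ε/2)) :=
    measure_biUnion_finset hdisj (fun i _ => measurableSet_ball)
  have hchain : ((k+1 : ℕ) : ENNReal) * ENNReal.ofReal (V (ε/2)) ≤
      ENNReal.ofReal (V (κ * (D + ε/2)) / κ ^ n) := by
    calc ((k+1 : ℕ) : ENNReal) * ENNReal.ofReal (V (ε/2))
        = ∑ _i ∈ Finset.range (k+1), ENNReal.ofReal (V (ε/2)) := by
          simp [Finset.sum_const, nsmul_eq_mul]
      _ ≤ ∑ i ∈ Finset.range (k+1), μ (Metric.ball (p i) (ε/2)) :=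
          Finset.sum_le_sum (fun i _ => hlower (p i) (ε/2) (by linarith))
      _ = μ (⋃ i ∈ Finset.range (k+1), Metric.ball (p i) (ε/2)) := hmeq.symm
      _ ≤ μ (Metric.ball x (D + ε/2)) := measure_mono hsub
      _ ≤ ENNReal.ofReal (V (κ * (D + ε/2)) / κ ^ n) :=
          hupper x (D + ε/2) (by linarith)
  have hreal : ((k:ℝ)+1) * V (ε/2) ≤ V (κ * (D + ε/2)) / κ ^ n := by
    have h1 : ENNReal.ofReal (((k:ℝ)+1) * V (ε/2)) ≤
        ENNReal.ofReal (V (κ * (D + ε/2)) / κ ^ n) := by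
      rw [ENNReal.ofReal_mul (by positivity)]
      have he : ENNReal.ofReal ((k:ℝ)+1) = ((k+1:ℕ) : ENNReal) := by
        rw [ENNReal.ofReal_add (by positivity) zero_le_one, ENNReal.ofReal_natCast,
          ENNReal.ofReal_one]
        push_cast; ring
      rw [he]
      exact hchain
    have h2 : (0:ℝ) ≤ V (κ * (D + ε/2)) / κ ^ n :=
      div_nonneg (hVpos _ (by nlinarith)).le hκn.le
    exact (ENNReal.ofReal_le_ofReal_iff h2).mp h1
  have hub : V (κ * (D + ε/2)) / κ ^ n ≤ A * V (ε/2) := by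
    have h1 : V (κ * (D + ε/2)) ≤ C * Real.exp ((n - 1 : ℝ) * (κ * (D + ε/2))) :=
      hVexp _ (mul_nonneg hκ0.le (by linarith))
    have h2 : A * V (ε/2) = C * Real.exp ((n - 1 : ℝ) * (κ * (D + ε/2))) / κ ^ n := by
      rw [hA]
      rw [show (n - 1 : ℝ) * (κ * (D + ε/2)) =
        κ * (n - 1 : ℝ) * ε / 2 + κ * (n - 1 : ℝ) * D by ring, Real.exp_add]
      field_simp
    rw [h2]
    exact div_le_div_of_nonneg_right h1 hκn.le
  have hfin : ((k:ℝ)+1) * V (ε/2) ≤ A * V (ε/2) := le_trans hreal hub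
  have : (k:ℝ)+1 ≤ A := le_of_mul_le_mul_right hfin hV2
  linarith
end

section
/- Let A = A⁻¹ be a finite set of isometries of a Hadamard space X (complete CAT(0)), and define L(A) = inf_{x∈X} max_{g∈A} d(x, gx). Then for every positive integer m, L(A^m) ≥ (√m / 2) · L(A), where A^m is the set of products of at most m elements of A. -/
/-!
Fix a base point `x` and let `ρ_k` be the Chebyshev radius of the orbit `A^k x`. For any point
`c`, let `R` be its farthest distance to `A^{k+1} x`. For `g ∈ A`, both `c` and `g c` lie within
`R` of every point of `A^k x`, because `g⁻¹ A^k ⊆ A^{k+1}`; the CN inequality at the midpoint of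
`[c, g c]` then gives `ρ_k² + d(c, g c)²/4 ≤ R²`. Hence `L(A)²/4 + ρ_k² ≤ ρ_{k+1}²`, so
`ρ_m ≥ (√m / 2) L(A)` by induction, and `ρ_m` is at most `max_{a ∈ A^m} d(x, a x)`.
-/

open Set

def CATzero (X : Type*) [MetricSpace X] : Prop :=
  ∀ (a b c : X) (a' b' c' : EuclideanSpace ℝ (Fin 2)),
    dist a b = dist a' b' → dist b c = dist b' c' → dist a c = dist a' c' →
    ∀ (f : ℝ → X) (f' : ℝ → EuclideanSpace ℝ (Fin 2)),
      IsGeodesicSegment f b c → IsGeodesicSegment f' b' c' →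
      ∀ t ∈ Set.Icc (0:ℝ) (dist b c), dist a (f t) ≤ dist a' (f' t)

/-- The joint minimal displacement `L(A) = inf_x max_{g ∈ A} d(x, g x)`. -/
noncomputable def jointDisplacement {G X : Type*} [Group G] [MetricSpace X]
    [MulAction G X] (A : Set G) : ℝ :=
  ⨅ x : X, ⨆ g ∈ A, dist x (g • x)

/-- `A^m`: the set of products of at most `m` elements of `A`. -/
def prodSet {G : Type*} [Group G] (A : Set G) (m : ℕ) : Set G :=
  {g : G | ∃ l : List G, l.length ≤ m ∧ (∀ y ∈ l, y ∈ A) ∧ l.prod = g}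

open Metric Bornology

lemma exists_coords_of_triangle_ineq {α β γ : ℝ} (hα : 0 ≤ α) (hβ : 0 ≤ β) (hγ : 0 ≤ γ)
    (hαβγ : α ≤ β + γ) (hβαγ : β ≤ α + γ) (hγαβ : γ ≤ α + β) :
    ∃ p q : ℝ, p ^ 2 + q ^ 2 = α ^ 2 ∧ (p - γ) ^ 2 + q ^ 2 = β ^ 2 := by
  rcases hγ.eq_or_lt with rfl | hγ
  · obtain rfl : α = β := by linarith
    exact ⟨α, 0, by ring, by ring⟩
  set p := (α ^ 2 + γ ^ 2 - β ^ 2) / (2 * γ)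
  have hp : p * (2 * γ) = α ^ 2 + γ ^ 2 - β ^ 2 := div_mul_cancel₀ _ (by positivity)
  -- Heron: `(2γα)² - (α² + γ² - β²)²` factors as a product of the four triangle defects.
  have hpα : p ^ 2 ≤ α ^ 2 := by
    refine le_of_mul_le_mul_right ?_ (by positivity : 0 < (2 * γ) ^ 2)
    have := mul_nonneg (mul_nonneg (sub_nonneg.2 hαβγ) (sub_nonneg.2 hβαγ))
      (mul_nonneg (sub_nonneg.2 hγαβ) (by positivity : 0 ≤ α + β + γ))
    nlinarith
  refine ⟨p, √(α ^ 2 - p ^ 2), ?_, ?_⟩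
  · rw [Real.sq_sqrt (sub_nonneg.2 hpα)]; ring
  · rw [Real.sq_sqrt (sub_nonneg.2 hpα)]; linear_combination -hp

lemma dist_euclideanPlane (a b c d : ℝ) :
    dist !₂[a, b] !₂[c, d] = √((a - c) ^ 2 + (b - d) ^ 2) := by
  rw [EuclideanSpace.dist_eq, Fin.sum_univ_two]
  simp [Real.dist_eq, sq_abs]

lemma isGeodesicSegment_euclideanPlane {γ : ℝ} (hγ : 0 ≤ γ) :
    IsGeodesicSegment (fun t : ℝ ↦ !₂[t, 0]) !₂[0, 0] !₂[γ, 0] := by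
  have hdist : ∀ s t : ℝ, dist !₂[s, 0] !₂[t, 0] = |s - t| := fun s t ↦ by
    rw [dist_euclideanPlane, sub_self, zero_pow two_ne_zero, add_zero, Real.sqrt_sq_eq_abs]
  refine ⟨rfl, ?_, fun s _ t _ ↦ hdist s t⟩
  rw [hdist, zero_sub, abs_neg, abs_of_nonneg hγ]

section prodSet

variable {G : Type*} [Group G] {A : Set G} {k : ℕ} {a b : G}

lemma one_mem_prodSet : (1 : G) ∈ prodSet A k :=
  ⟨[], by simp, by simp, rfl⟩

lemma prodSet_mono (A : Set G) : Monotone (prodSet A) :=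
  fun _ _ hjk _ ⟨l, hl, hA, hp⟩ ↦ ⟨l, hl.trans hjk, hA, hp⟩

lemma mul_mem_prodSet_succ (ha : a ∈ A) (hb : b ∈ prodSet A k) : a * b ∈ prodSet A (k + 1) := by
  obtain ⟨l, hl, hA, rfl⟩ := hb
  exact ⟨a :: l, by simpa using hl, by simpa [ha] using hA, List.prod_cons⟩

open Pointwise in
lemma prodSet_succ_subset : prodSet A (k + 1) ⊆ insert 1 (A * prodSet A k) := by
  rintro _ ⟨_ | ⟨a, l⟩, hl, hA, rfl⟩
  · exact mem_insert _ _
  · simp only [List.length_cons, add_le_add_iff_right, List.mem_cons, forall_eq_or_imp] at hl hA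
    exact mem_insert_of_mem _ (mul_mem_mul hA.1 ⟨l, hl, hA.2, rfl⟩)

lemma prodSet_finite (hA : A.Finite) : ∀ k, (prodSet A k).Finite
  | 0 => (finite_singleton 1).subset fun _ ⟨l, hl, _, hp⟩ ↦ by
      simp_all [List.length_eq_zero_iff.1 (Nat.le_zero.1 hl)]
  | k + 1 => ((hA.mul (prodSet_finite hA k)).insert 1).subset prodSet_succ_subset

end prodSet

section ChebyshevRadius

variable {X : Type*} [PseudoMetricSpace X] {S : Set X} {y z : X} {R : ℝ}

noncomputable def farthestDist (S : Set X) (z : X) : ℝ :=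
  ⨆ y ∈ S, dist z y

noncomputable def chebyshevRadius (S : Set X) : ℝ :=
  ⨅ z, farthestDist S z

lemma farthestDist_nonneg : 0 ≤ farthestDist S z :=
  Real.iSup_nonneg fun _ ↦ Real.iSup_nonneg fun _ ↦ dist_nonneg

lemma farthestDist_le (hR : 0 ≤ R) (h : ∀ y ∈ S, dist z y ≤ R) : farthestDist S z ≤ R :=
  Real.iSup_le (fun y ↦ Real.iSup_le (h y) hR) hR

lemma dist_le_farthestDist (hS : IsBounded S) (hy : y ∈ S) : dist z y ≤ farthestDist S z := by
  obtain ⟨r, hr, hSr⟩ := hS.subset_closedBall_lt 0 z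
  refine le_ciSup_of_le ?_ y (le_ciSup_of_le (by simp) hy le_rfl)
  refine ⟨r, forall_mem_range.2 fun y' ↦ Real.iSup_le (fun hy' ↦ ?_) hr.le⟩
  simpa [dist_comm] using hSr hy'

lemma farthestDist_image {ι : Type*} {s : Set ι} {p : ι → X} (hs : IsBounded (p '' s)) :
    farthestDist (p '' s) z = ⨆ i ∈ s, dist z (p i) := by
  obtain ⟨r, hSr⟩ := hs.subset_closedBall z
  refine ciSup_image ⟨r, forall_mem_range.2 fun i ↦ ?_⟩ ?_
  · simpa [dist_comm] using hSr (mem_image_of_mem p i.2)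
  · exact Real.sSup_empty.trans_le (Real.iSup_nonneg fun _ ↦ dist_nonneg)

lemma chebyshevRadius_nonneg : 0 ≤ chebyshevRadius S :=
  Real.iInf_nonneg fun _ ↦ farthestDist_nonneg

lemma chebyshevRadius_le_farthestDist : chebyshevRadius S ≤ farthestDist S z :=
  ciInf_le ⟨0, forall_mem_range.2 fun _ ↦ farthestDist_nonneg⟩ z

end ChebyshevRadius

namespace CATzero

variable {X : Type*} [MetricSpace X]

/-- The CN inequality of Bruhat–Tits, read off a Euclidean comparison triangle. -/
theorem dist_midpoint_sq_le (hCAT : CATzero X) {f : ℝ → X} {b c : X}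
    (hf : IsGeodesicSegment f b c) (a : X) :
    dist a (f (dist b c / 2)) ^ 2 ≤
      dist a b ^ 2 / 2 + dist a c ^ 2 / 2 - dist b c ^ 2 / 4 := by
  set γ := dist b c
  have hγ : 0 ≤ γ := dist_nonneg
  obtain ⟨p, q, hb, hc⟩ := exists_coords_of_triangle_ineq dist_nonneg dist_nonneg hγ
    (dist_triangle_right a b c) (dist_triangle a b c) (dist_triangle_left b c a)
  have hab : dist a b = dist !₂[p, q] !₂[0, 0] := by
    rw [dist_euclideanPlane, sub_zero, sub_zero, hb, Real.sqrt_sq dist_nonneg]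
  have hbc : γ = dist !₂[(0 : ℝ), 0] !₂[γ, 0] := by
    rw [dist_euclideanPlane, zero_sub, sub_self, neg_sq, zero_pow two_ne_zero, add_zero,
      Real.sqrt_sq hγ]
  have hac : dist a c = dist !₂[p, q] !₂[γ, 0] := by
    rw [dist_euclideanPlane, sub_zero, hc, Real.sqrt_sq dist_nonneg]
  have hcomp := hCAT a b c _ _ _ hab hbc hac f _ hf (isGeodesicSegment_euclideanPlane hγ)
    (γ / 2) ⟨by linarith, by linarith⟩
  calc dist a (f (γ / 2)) ^ 2 ≤ dist !₂[p, q] !₂[γ / 2, 0] ^ 2 :=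
        pow_le_pow_left₀ dist_nonneg hcomp 2
    _ = _ := by
        rw [dist_euclideanPlane, Real.sq_sqrt (by positivity), ← hb, ← hc]
        ring

theorem chebyshevRadius_sq_add_le (hCAT : CATzero X)
    (hGeod : ∀ x y : X, ∃ f : ℝ → X, IsGeodesicSegment f x y) {S : Set X} (hS : S.Nonempty)
    {c c' : X} {R : ℝ} (hc : ∀ y ∈ S, dist y c ≤ R) (hc' : ∀ y ∈ S, dist y c' ≤ R) :
    chebyshevRadius S ^ 2 + dist c c' ^ 2 / 4 ≤ R ^ 2 := by
  obtain ⟨f, hf⟩ := hGeod c c'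
  set r := R ^ 2 - dist c c' ^ 2 / 4 with hr_def
  have hmid : ∀ y ∈ S, dist (f (dist c c' / 2)) y ^ 2 ≤ r := fun y hy ↦ by
    have := hCAT.dist_midpoint_sq_le hf y
    have := pow_le_pow_left₀ dist_nonneg (hc y hy) 2
    have := pow_le_pow_left₀ dist_nonneg (hc' y hy) 2
    rw [dist_comm, hr_def]
    linarith
  obtain ⟨y, hy⟩ := hS
  have hr : 0 ≤ r := (sq_nonneg _).trans (hmid y hy)
  have hrad : chebyshevRadius S ≤ √r :=
    chebyshevRadius_le_farthestDist.trans <| farthestDist_le (Real.sqrt_nonneg r) fun y hy ↦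
      (Real.le_sqrt dist_nonneg hr).2 (hmid y hy)
  linarith [(Real.le_sqrt chebyshevRadius_nonneg hr).1 hrad, hr_def]

end CATzero

section Orbit

variable {G X : Type*} [Group G] [MetricSpace X] [MulAction G X] {A : Set G}

lemma jointDisplacement_nonneg : 0 ≤ jointDisplacement (X := X) A :=
  Real.iInf_nonneg fun _ ↦ Real.iSup_nonneg fun _ ↦ Real.iSup_nonneg fun _ ↦ dist_nonneg

lemma jointDisplacement_le (c : X) : jointDisplacement (X := X) A ≤ ⨆ g ∈ A, dist c (g • c) :=
  ciInf_le ⟨0, forall_mem_range.2 fun _ ↦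
    Real.iSup_nonneg fun _ ↦ Real.iSup_nonneg fun _ ↦ dist_nonneg⟩ c

lemma isBounded_image_prodSet (hfin : A.Finite) (x : X) (k : ℕ) :
    IsBounded ((· • x) '' prodSet A k) :=
  ((prodSet_finite hfin k).image _).isBounded

namespace CATzero

variable [IsIsometricSMul G X] (hCAT : CATzero X)
  (hGeod : ∀ x y : X, ∃ f : ℝ → X, IsGeodesicSegment f x y)
  (hfin : A.Finite) (hsymm : A⁻¹ = A) (x : X)
include hCAT hGeod hfin hsymm

theorem jointDisplacement_sq_div_four_add_le_farthestDist_sq (k : ℕ) (c : X) :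
    jointDisplacement (X := X) A ^ 2 / 4 + chebyshevRadius ((· • x) '' prodSet A k) ^ 2 ≤
      farthestDist ((· • x) '' prodSet A (k + 1)) c ^ 2 := by
  set ρ := chebyshevRadius ((· • x) '' prodSet A k)
  set R := farthestDist ((· • x) '' prodSet A (k + 1)) c
  have hS : ((· • x) '' prodSet A k).Nonempty := ⟨_, mem_image_of_mem _ one_mem_prodSet⟩
  have hc : ∀ y ∈ (· • x) '' prodSet A k, dist y c ≤ R := by
    rintro _ ⟨a, ha, rfl⟩
    rw [dist_comm]
    exact dist_le_farthestDist (isBounded_image_prodSet hfin x _)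
      (mem_image_of_mem _ (prodSet_mono A k.le_succ ha))
  have hgc : ∀ g ∈ A, ∀ y ∈ (· • x) '' prodSet A k, dist y (g • c) ≤ R := by
    rintro g hg _ ⟨a, ha, rfl⟩
    rw [← dist_smul g⁻¹, inv_smul_smul, smul_smul, dist_comm]
    have hg' : g⁻¹ ∈ A := by rwa [← hsymm, inv_mem_inv]
    exact dist_le_farthestDist (isBounded_image_prodSet hfin x _)
      (mem_image_of_mem _ (mul_mem_prodSet_succ hg' ha))
  have hρR : ρ ^ 2 ≤ R ^ 2 := by
    simpa using hCAT.chebyshevRadius_sq_add_le hGeod hS hc hc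
  have hL : jointDisplacement (X := X) A ≤ √(4 * (R ^ 2 - ρ ^ 2)) := by
    refine (jointDisplacement_le c).trans <| Real.iSup_le (fun g ↦ Real.iSup_le (fun hg ↦ ?_)
      (Real.sqrt_nonneg _)) (Real.sqrt_nonneg _)
    have := hCAT.chebyshevRadius_sq_add_le hGeod hS hc (hgc g hg)
    exact (Real.le_sqrt dist_nonneg (by linarith)).2 (by linarith)
  linarith [(Real.le_sqrt jointDisplacement_nonneg (by linarith)).1 hL]

variable [Nonempty X]

theorem jointDisplacement_sq_div_four_add_le_chebyshevRadius_sq (k : ℕ) :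
    jointDisplacement (X := X) A ^ 2 / 4 + chebyshevRadius ((· • x) '' prodSet A k) ^ 2 ≤
      chebyshevRadius ((· • x) '' prodSet A (k + 1)) ^ 2 := by
  have hsqrt : √(jointDisplacement (X := X) A ^ 2 / 4 +
      chebyshevRadius ((· • x) '' prodSet A k) ^ 2) ≤
        chebyshevRadius ((· • x) '' prodSet A (k + 1)) := le_ciInf fun c ↦
    (Real.sqrt_le_sqrt (hCAT.jointDisplacement_sq_div_four_add_le_farthestDist_sq
      hGeod hfin hsymm x k c)).trans_eq (Real.sqrt_sq farthestDist_nonneg)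
  calc _ = √(jointDisplacement (X := X) A ^ 2 / 4 +
        chebyshevRadius ((· • x) '' prodSet A k) ^ 2) ^ 2 := (Real.sq_sqrt (by positivity)).symm
    _ ≤ _ := pow_le_pow_left₀ (Real.sqrt_nonneg _) hsqrt 2

theorem sqrt_mul_jointDisplacement_le_chebyshevRadius (k : ℕ) :
    √k / 2 * jointDisplacement (X := X) A ≤ chebyshevRadius ((· • x) '' prodSet A k) := by
  have hsq : ∀ k : ℕ, k * jointDisplacement (X := X) A ^ 2 / 4 ≤
      chebyshevRadius ((· • x) '' prodSet A k) ^ 2 := by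
    intro k
    induction k with
    | zero => simpa using sq_nonneg _
    | succ k ih =>
      push_cast
      linarith [hCAT.jointDisplacement_sq_div_four_add_le_chebyshevRadius_sq hGeod hfin hsymm x k]
  refine (pow_le_pow_iff_left₀ (mul_nonneg (by positivity) jointDisplacement_nonneg)
    chebyshevRadius_nonneg two_ne_zero).1 ?_
  calc (√k / 2 * jointDisplacement (X := X) A) ^ 2
      = k * jointDisplacement (X := X) A ^ 2 / 4 := by
        rw [mul_pow, div_pow, Real.sq_sqrt k.cast_nonneg]; ring
    _ ≤ _ := hsq k

end CATzero

end Orbit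

theorem jointDisplacement_prodSet_ge_general
    {G X : Type*} [Group G] [MetricSpace X] [Nonempty X]
    [MulAction G X]
    (hiso : ∀ g : G, Isometry fun x : X => g • x)
    (hGeod : ∀ x y : X, ∃ f : ℝ → X, IsGeodesicSegment f x y)
    (hCAT : CATzero X)
    (A : Set G) (hfin : A.Finite) (hsymm : A⁻¹ = A)
    (m : ℕ) :
    Real.sqrt m / 2 * jointDisplacement (X := X) A ≤
      jointDisplacement (X := X) (prodSet A m) := by
  have : IsIsometricSMul G X := ⟨hiso⟩
  refine le_ciInf fun x ↦ ?_
  calc √m / 2 * jointDisplacement (X := X) A ≤ chebyshevRadius ((· • x) '' prodSet A m) :=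
        hCAT.sqrt_mul_jointDisplacement_le_chebyshevRadius hGeod hfin hsymm x m
    _ ≤ farthestDist ((· • x) '' prodSet A m) x := chebyshevRadius_le_farthestDist
    _ = ⨆ a ∈ prodSet A m, dist x (a • x) := farthestDist_image (isBounded_image_prodSet hfin x m)

/-- **Breuillard–Fujiwara displacement inequality.**  Let `A = A⁻¹` be a finite set of
isometries of a Hadamard space (complete CAT(0) geodesic space) `X`.  Then for every
`m`, `L(Aᵐ) ≥ (√m / 2) · L(A)`. -/
theorem jointDisplacement_prodSet_ge
    {G X : Type*} [Group G] [MetricSpace X] [Nonempty X] [CompleteSpace X]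
    [MulAction G X]
    (hiso : ∀ g : G, Isometry fun x : X => g • x)
    (hGeod : ∀ x y : X, ∃ f : ℝ → X, IsGeodesicSegment f x y)
    (hCAT : CATzero X)
    (A : Set G) (hfin : A.Finite) (hsymm : A⁻¹ = A) (hne : A.Nonempty)
    (m : ℕ) (hm : 1 ≤ m) :
    Real.sqrt m / 2 * jointDisplacement (X := X) A ≤
      jointDisplacement (X := X) (prodSet A m) :=
  jointDisplacement_prodSet_ge_general hiso hGeod hCAT A hfin hsymm m
end
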